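/- If ℓ ≥ 2 and 0 ≤ r ≤ 2^{ℓ−1}, then M₀(2^ℓ + r) = M₀(2^ℓ) + M₀(r) and m₀(2^ℓ + r) = m₀(2^ℓ) + m₀(r). -/

import Mathlib

/-- The 2-kernel of a sequence `s : ℕ → ℤ`. -/
def kernel2 (s : ℕ → ℤ) : Set (ℕ → ℤ) :=
  {t | ∃ i j : ℕ, j < 2 ^ i ∧ t = fun n => s (2 ^ i * n + j)}

/-- A sequence is 2-regular if the ℤ-module spanned by its 2-kernel is finitely generated. -/
def IsTwoRegular (s : ℕ → ℤ) : Prop :=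
  (Submodule.span ℤ (kernel2 s)).FG

/-- A sequence is 2-automatic if its 2-kernel is finite. -/
def IsTwoAutomatic (s : ℕ → ℤ) : Prop :=
  (kernel2 s).Finite

/-- The period-doubling word, fixed point (starting with 0) of 0 ↦ 01, 1 ↦ 00:
its `n`-th letter is the parity of the 2-adic valuation of `n+1`. -/
def pd (n : ℕ) : ℕ := (n + 1).factorization 2 % 2

/-- The Thue–Morse word, fixed point (starting with 0) of 0 ↦ 01, 1 ↦ 10:
its `n`-th letter is the parity of the binary digit sum of `n`. -/
def tm (n : ℕ) : ℕ := (Nat.digits 2 n).sum % 2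

/-- The 2-block coding `x = block(p, 2)` of the period-doubling word. -/
def xw (n : ℕ) : ℕ := 2 * pd n + pd (n + 1)

/-- The 2-block coding `y = block(t, 2)` of the Thue–Morse word. -/
def yw (n : ℕ) : ℕ := 2 * tm n + tm (n + 1)

/-- The factor of an infinite word `w` of length `len` occurring at position `i`. -/
def factorAt (w : ℕ → ℕ) (i len : ℕ) : List ℕ :=
  (List.range len).map fun k => w (i + k)

/-- `u` is a factor of the infinite word `w`. -/
def IsFactor (w : ℕ → ℕ) (u : List ℕ) : Prop :=
  ∃ i, u = factorAt w i u.length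

/-- Maximal number of 0's in a factor of `x` of length `n`. -/
noncomputable def M0 (n : ℕ) : ℕ := sSup {k | ∃ i, (factorAt xw i n).count 0 = k}

/-- Minimal number of 0's in a factor of `x` of length `n`. -/
noncomputable def m0 (n : ℕ) : ℕ := sInf {k | ∃ i, (factorAt xw i n).count 0 = k}

noncomputable def D0 (n : ℕ) : ℕ := M0 n - m0 n

/-- Maximal number of 2's in a factor of `x` of length `n`. -/
noncomputable def M2c (n : ℕ) : ℕ := sSup {k | ∃ i, (factorAt xw i n).count 2 = k}

/-- Minimal number of 2's in a factor of `x` of length `n`. -/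
noncomputable def m2c (n : ℕ) : ℕ := sInf {k | ∃ i, (factorAt xw i n).count 2 = k}

/-- The max-jump function for `M0`. -/
noncomputable def JM0 : ℕ → ℕ
  | 0 => 0
  | n + 1 => if M0 n < M0 (n + 1) then 1 else 0

/-- The min-jump function for `m0`. -/
noncomputable def jm0 (n : ℕ) : ℕ := if m0 n < m0 (n + 1) then 1 else 0

/-- Maximal total number of 1's and 2's in a factor of `y` of length `n`. -/
noncomputable def M12 (n : ℕ) : ℕ :=
  sSup {k | ∃ i, (factorAt yw i n).count 1 + (factorAt yw i n).count 2 = k}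

/-- Minimal total number of 1's and 2's in a factor of `y` of length `n`. -/
noncomputable def m12 (n : ℕ) : ℕ :=
  sInf {k | ∃ i, (factorAt yw i n).count 1 + (factorAt yw i n).count 2 = k}

noncomputable def D12 (n : ℕ) : ℕ := M12 n - m12 n

/-- Maximal total number of 0's and 3's in a factor of `y` of length `n`. -/
noncomputable def M03 (n : ℕ) : ℕ :=
  sSup {k | ∃ i, (factorAt yw i n).count 0 + (factorAt yw i n).count 3 = k}

/-- Minimal total number of 0's and 3's in a factor of `y` of length `n`. -/
noncomputable def m03 (n : ℕ) : ℕ :=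
  sInf {k | ∃ i, (factorAt yw i n).count 0 + (factorAt yw i n).count 3 = k}

/-- The max-jump function for `M03`. -/
noncomputable def JM03 (n : ℕ) : ℕ := if M03 (n - 1) < M03 n then 1 else 0

/-- The min-jump function for `m03`. -/
noncomputable def jm03 (n : ℕ) : ℕ := if m03 n < m03 (n + 1) then 1 else 0

/-- Abelian complexity: the number of abelian equivalence classes (i.e. distinct
multisets of letters) of factors of `w` of length `n`. -/
noncomputable def abComplexity (w : ℕ → ℕ) (n : ℕ) : ℕ :=
  Set.ncard {m : Multiset ℕ | ∃ i, (↑(factorAt w i n) : Multiset ℕ) = m}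

/-- The number of occurrences of `v` as a factor of `u`. -/
def countFactor (u v : List ℕ) : ℕ :=
  ((List.range (u.length + 1 - v.length)).filter
    fun i => decide ((u.drop i).take v.length = v)).length

/-- 2-abelian complexity: the number of 2-abelian equivalence classes of factors of `w`
of length `n`, where two words are 2-abelian equivalent when every word of length at most 2
occurs equally often in both. -/
noncomputable def abel2Complexity (w : ℕ → ℕ) (n : ℕ) : ℕ :=
  Set.ncard {f : List ℕ → ℕ |
    ∃ i, f = fun v => if v.length ≤ 2 then countFactor (factorAt w i n) v else 0}

/-- The morphism φ : 0 ↦ 12, 1 ↦ 12, 2 ↦ 00. -/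
def phiL : ℕ → List ℕ
  | 0 => [1, 2]
  | 1 => [1, 2]
  | 2 => [0, 0]
  | _ => []

/-- The morphism τ : 0 ↦ 0, 1 ↦ 2, 2 ↦ 1. -/
def tauL : ℕ → ℕ
  | 1 => 2
  | 2 => 1
  | n => n

/-!
A letter of `x` is `0` exactly when `p` reads `00` there, and `p` has no factor `11`, so the
number of 0s in `x[i, i + n)` is `n + p(i) - p(i + n) - 2 * #{1s in p[i, i + n)}`. Everything is
therefore read off the set of triples `(#{1s in p[a, a + m)}, p(a), p(a + m))`, `a ∈ ℕ`. As
`p(2a) = 0` and `p(2a + 1) = 1 - p(a)`, these sets for the lengths `2h` and `2h + 1` are determined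
by those for `h` and `h + 1`. By induction on `k ≥ 3`, for `1 ≤ ρ ≤ 2^(k-1)` the triples for the
length `2^k + ρ` are those for `ρ` with the count of 1s raised by `c_k` or by `c_k + 1`, where
`c_k = ⌊(2^k - 1)/3⌋`; the triples for the length `2^k` are explicit. Comparing extremes gives
`M₀(2^k + ρ) - M₀(ρ) = 2^k - 2c_k = M₀(2^k)` and `m₀(2^k + ρ) - m₀(ρ) = 2^k - 2c_k - 2 = m₀(2^k)`.
For `l = 2` the theorem is checked on the explicit triples.
-/

open Finset

theorem range_nat_eq_even_union_odd {α : Type*} (f : ℕ → α) :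
    Set.range f = Set.range (fun a => f (2 * a)) ∪ Set.range (fun a => f (2 * a + 1)) := by
  ext y
  constructor
  · rintro ⟨n, rfl⟩
    obtain ⟨a, rfl | rfl⟩ := n.even_or_odd'
    exacts [Or.inl ⟨a, rfl⟩, Or.inr ⟨a, rfl⟩]
  · rintro (⟨a, rfl⟩ | ⟨a, rfl⟩) <;> exact ⟨_, rfl⟩

theorem pd_two_mul (n : ℕ) : pd (2 * n) = 0 := by
  rw [pd, Nat.factorization_eq_zero_of_not_dvd (by omega)]

theorem pd_two_mul_add_one (n : ℕ) : pd (2 * n + 1) = 1 - pd n := by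
  rw [pd, pd, show 2 * n + 1 + 1 = 2 * (n + 1) by ring,
    Nat.factorization_mul two_ne_zero (by omega : n + 1 ≠ 0), Finsupp.add_apply,
    Nat.Prime.factorization_self Nat.prime_two]
  omega

theorem pd_le_one (n : ℕ) : pd n ≤ 1 := Nat.le_of_lt_succ (Nat.mod_lt _ two_pos)

theorem pd_add_pd_succ_le_one (n : ℕ) : pd n + pd (n + 1) ≤ 1 := by
  obtain ⟨m, rfl | rfl⟩ := n.even_or_odd'
  · simp [pd_two_mul, pd_le_one]
  · rw [show 2 * m + 1 + 1 = 2 * (m + 1) by ring, pd_two_mul]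
    simp [pd_le_one]

theorem pd_zero : pd 0 = 0 := pd_two_mul 0

theorem pd_one : pd 1 = 1 := by simpa [pd_zero] using pd_two_mul_add_one 0

theorem pd_two : pd 2 = 0 := pd_two_mul 1

theorem pd_three : pd 3 = 0 := by simpa [pd_one] using pd_two_mul_add_one 1

def pdSum (a m : ℕ) : ℕ := ∑ k ∈ range m, pd (a + k)

theorem pdSum_le (a m : ℕ) : pdSum a m ≤ m := by
  simpa [pdSum] using sum_le_card_nsmul (range m) _ 1 fun k _ => pd_le_one (a + k)

theorem pdSum_succ (a m : ℕ) : pdSum a (m + 1) = pdSum a m + pd (a + m) :=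
  sum_range_succ _ _

theorem pdSum_zero_add (a m : ℕ) : pdSum 0 (a + m) = pdSum 0 a + pdSum a m := by
  simp [pdSum, sum_range_add]

theorem pdSum_zero_two_mul_add (n s : ℕ) (hs : s < 2) :
    pdSum 0 (2 * n + s) + pdSum 0 n = n := by
  have hodd (n : ℕ) : pdSum 0 (2 * n + 1) = pdSum 0 (2 * n) := by
    simp [pdSum_succ, pd_two_mul]
  suffices pdSum 0 (2 * n) + pdSum 0 n = n by interval_cases s <;> simpa [hodd]
  induction n with
  | zero => rfl
  | succ n ih =>
    rw [show 2 * (n + 1) = 2 * n + 1 + 1 by ring, pdSum_succ, hodd, pdSum_succ]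
    simp only [zero_add, pd_two_mul_add_one]
    have := pd_le_one n
    omega

theorem pdSum_two_mul_add_two_mul (a h s : ℕ) (hs : s < 2) :
    pdSum (2 * a + s) (2 * h) + pdSum a h = h := by
  have := pdSum_zero_add (2 * a + s) (2 * h)
  rw [show 2 * a + s + 2 * h = 2 * (a + h) + s by ring] at this
  have := pdSum_zero_two_mul_add (a + h) s hs
  have := pdSum_zero_two_mul_add a s hs
  have := pdSum_zero_add a h
  omega

theorem pdSum_two_mul_two_mul_add_one (a h : ℕ) : pdSum (2 * a) (2 * h + 1) + pdSum a h = h := by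
  have := pdSum_zero_add (2 * a) (2 * h + 1)
  rw [show 2 * a + (2 * h + 1) = 2 * (a + h) + 1 by ring] at this
  have := pdSum_zero_two_mul_add (a + h) 1 one_lt_two
  have := pdSum_zero_two_mul_add a 0 two_pos
  have := pdSum_zero_add a h
  simp only [add_zero] at *
  omega

theorem pdSum_two_mul_add_one_two_mul_add_one (a h : ℕ) :
    pdSum (2 * a + 1) (2 * h + 1) + pdSum a (h + 1) = h + 1 := by
  have := pdSum_zero_add (2 * a + 1) (2 * h + 1)
  rw [show 2 * a + 1 + (2 * h + 1) = 2 * (a + (h + 1)) + 0 by ring] at this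
  have := pdSum_zero_two_mul_add (a + (h + 1)) 0 two_pos
  have := pdSum_zero_two_mul_add a 1 one_lt_two
  have := pdSum_zero_add a (h + 1)
  omega

def windowTriple (m a : ℕ) : ℕ × ℕ × ℕ := (pdSum a m, pd a, pd (a + m))

def windowStats (m : ℕ) : Set (ℕ × ℕ × ℕ) := Set.range (windowTriple m)

theorem windowStats_fst_le {m : ℕ} : ∀ u ∈ windowStats m, u.1 ≤ m := by
  rintro _ ⟨a, rfl⟩
  exact pdSum_le a m

-- In both lifts the first image is made of the windows starting at `2a`, the second of those
-- starting at `2a + 1`, each described through a window starting at `a`.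
def evenLift (h : ℕ) (S : Set (ℕ × ℕ × ℕ)) : Set (ℕ × ℕ × ℕ) :=
  (fun u => (h - u.1, 0, 0)) '' S ∪ (fun u => (h - u.1, 1 - u.2.1, 1 - u.2.2)) '' S

def oddLift (h : ℕ) (S S' : Set (ℕ × ℕ × ℕ)) : Set (ℕ × ℕ × ℕ) :=
  (fun u => (h - u.1, 0, 1 - u.2.2)) '' S ∪ (fun u => (h + 1 - u.1, 1 - u.2.1, 0)) '' S'

theorem windowStats_two_mul (h : ℕ) : windowStats (2 * h) = evenLift h (windowStats h) := by
  rw [windowStats, range_nat_eq_even_union_odd, evenLift, windowStats, ← Set.range_comp,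
    ← Set.range_comp]
  congr 2 <;> funext a <;> simp only [Function.comp, windowTriple]
  · have := pdSum_two_mul_add_two_mul a h 0 two_pos
    rw [pd_two_mul, show 2 * a + 2 * h = 2 * (a + h) by ring, pd_two_mul]
    ext <;> simp at this ⊢; omega
  · have := pdSum_two_mul_add_two_mul a h 1 one_lt_two
    rw [pd_two_mul_add_one, show 2 * a + 1 + 2 * h = 2 * (a + h) + 1 by ring, pd_two_mul_add_one]
    ext <;> simp; omega

theorem windowStats_two_mul_add_one (h : ℕ) :
    windowStats (2 * h + 1) = oddLift h (windowStats h) (windowStats (h + 1)) := by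
  rw [windowStats, range_nat_eq_even_union_odd, oddLift, windowStats, windowStats,
    ← Set.range_comp, ← Set.range_comp]
  congr 2 <;> funext a <;> simp only [Function.comp, windowTriple]
  · have := pdSum_two_mul_two_mul_add_one a h
    rw [pd_two_mul, show 2 * a + (2 * h + 1) = 2 * (a + h) + 1 by ring, pd_two_mul_add_one]
    ext <;> simp; omega
  · have := pdSum_two_mul_add_one_two_mul_add_one a h
    rw [pd_two_mul_add_one, show 2 * a + 1 + (2 * h + 1) = 2 * (a + (h + 1)) by ring, pd_two_mul]
    ext <;> simp; omega

def addOnes (c : ℕ) (S : Set (ℕ × ℕ × ℕ)) : Set (ℕ × ℕ × ℕ) := (fun u => (c + u.1, u.2)) '' S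

def shiftStats (c : ℕ) (S : Set (ℕ × ℕ × ℕ)) : Set (ℕ × ℕ × ℕ) := addOnes c (S ∪ addOnes 1 S)

theorem addOnes_zero (S : Set (ℕ × ℕ × ℕ)) : addOnes 0 S = S := by
  simp [addOnes]

theorem mem_shiftStats {c : ℕ} {S : Set (ℕ × ℕ × ℕ)} {t : ℕ × ℕ × ℕ} :
    t ∈ shiftStats c S ↔ ∃ u ∈ S, ∃ δ ≤ 1, (c + δ + u.1, u.2) = t := by
  constructor
  · rintro ⟨_, hu | ⟨u, hu, rfl⟩, rfl⟩
    · exact ⟨_, hu, 0, zero_le_one, rfl⟩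
    · exact ⟨u, hu, 1, le_rfl, by simp [add_assoc]⟩
  · rintro ⟨u, hu, δ, hδ, rfl⟩
    interval_cases δ
    · exact ⟨u, Or.inl hu, rfl⟩
    · exact ⟨_, Or.inr ⟨u, hu, rfl⟩, by simp [add_assoc]⟩

theorem evenLift_union (h : ℕ) (S T : Set (ℕ × ℕ × ℕ)) :
    evenLift h (S ∪ T) = evenLift h S ∪ evenLift h T := by
  simp only [evenLift, Set.image_union, Set.union_union_union_comm]

theorem oddLift_union (h : ℕ) (S S' T T' : Set (ℕ × ℕ × ℕ)) :
    oddLift h (S ∪ T) (S' ∪ T') = oddLift h S S' ∪ oddLift h T T' := by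
  simp only [oddLift, Set.image_union, Set.union_union_union_comm]

theorem evenLift_addOnes {b : ℕ} {S : Set (ℕ × ℕ × ℕ)} (hS : ∀ u ∈ S, u.1 ≤ b) (c c' : ℕ) :
    evenLift (c + c' + b) (addOnes c S) = addOnes c' (evenLift b S) := by
  simp only [evenLift, addOnes, Set.image_union, Set.image_image]
  congr 1 <;> refine Set.image_congr fun u hu => ?_ <;> have := hS u hu <;> ext <;> simp <;> omega

theorem oddLift_addOnes {b : ℕ} {S S' : Set (ℕ × ℕ × ℕ)} (hS : ∀ u ∈ S, u.1 ≤ b)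
    (hS' : ∀ u ∈ S', u.1 ≤ b + 1) (c c' : ℕ) :
    oddLift (c + c' + b) (addOnes c S) (addOnes c S') = addOnes c' (oddLift b S S') := by
  simp only [oddLift, addOnes, Set.image_union, Set.image_image]
  congr 1 <;> refine Set.image_congr fun u hu => ?_
  · have := hS u hu
    ext <;> simp; omega
  · have := hS' u hu
    ext <;> simp; omega

theorem fst_le_of_mem_union_addOnes {b : ℕ} {S : Set (ℕ × ℕ × ℕ)} (hS : ∀ u ∈ S, u.1 ≤ b) :
    ∀ u ∈ S ∪ addOnes 1 S, u.1 ≤ b + 1 := by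
  rintro _ (hu | ⟨u, hu, rfl⟩) <;> have := hS _ hu <;> simp <;> omega

theorem evenLift_shiftStats {n σ c c' : ℕ} (hn : c + c' + 1 = n) {S : Set (ℕ × ℕ × ℕ)}
    (hS : ∀ u ∈ S, u.1 ≤ σ) :
    evenLift (n + σ) (shiftStats c S) = shiftStats c' (evenLift σ S) := by
  have h0 := evenLift_addOnes hS 0 1
  have h1 := evenLift_addOnes hS 1 0
  rw [addOnes_zero, zero_add, add_comm] at h0
  rw [addOnes_zero, add_zero, add_comm] at h1
  rw [shiftStats, ← hn, show c + c' + 1 + σ = c + c' + (σ + 1) by ring,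
    evenLift_addOnes (fst_le_of_mem_union_addOnes hS), evenLift_union, h0, h1, Set.union_comm,
    shiftStats]

theorem oddLift_shiftStats {n σ c c' : ℕ} (hn : c + c' + 1 = n) {S S' : Set (ℕ × ℕ × ℕ)}
    (hS : ∀ u ∈ S, u.1 ≤ σ) (hS' : ∀ u ∈ S', u.1 ≤ σ + 1) :
    oddLift (n + σ) (shiftStats c S) (shiftStats c S') = shiftStats c' (oddLift σ S S') := by
  have h0 := oddLift_addOnes hS hS' 0 1
  have h1 := oddLift_addOnes hS hS' 1 0
  rw [addOnes_zero, addOnes_zero, zero_add, add_comm] at h0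
  rw [addOnes_zero, add_zero, add_comm] at h1
  rw [shiftStats, shiftStats, ← hn, show c + c' + 1 + σ = c + c' + (σ + 1) by ring,
    oddLift_addOnes (fst_le_of_mem_union_addOnes hS) (fst_le_of_mem_union_addOnes hS'),
    oddLift_union, h0, h1, Set.union_comm, shiftStats]

theorem windowStats_one : windowStats 1 = {(0, 0, 0), (0, 0, 1), (1, 1, 0)} := by
  ext ⟨q, e, d⟩
  simp only [Set.mem_insert_iff, Set.mem_singleton_iff, Prod.mk.injEq]
  constructor
  · rintro ⟨a, ha⟩
    simp only [windowTriple, pdSum, range_one, sum_singleton, add_zero, Prod.mk.injEq] at ha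
    have := pd_add_pd_succ_le_one a
    have := pd_le_one a
    omega
  · rintro (⟨rfl, rfl, rfl⟩ | ⟨rfl, rfl, rfl⟩ | ⟨rfl, rfl, rfl⟩)
    · exact ⟨2, by simp [windowTriple, pdSum, pd_two, pd_three]⟩
    · exact ⟨0, by simp [windowTriple, pdSum, pd_zero, pd_one]⟩
    · exact ⟨1, by simp [windowTriple, pdSum, pd_one, pd_two]⟩

-- Identities between explicit finite sets are decided after moving them to `Finset`.
theorem windowStats_two :
    windowStats 2 = {(0, 0, 0), (0, 0, 1), (1, 0, 0), (1, 1, 0), (1, 1, 1)} := by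
  rw [show 2 = 2 * 1 from rfl, windowStats_two_mul, windowStats_one]
  simp only [evenLift, ← Finset.coe_singleton, ← Finset.coe_insert, ← Finset.coe_image,
    ← Finset.coe_union, Finset.coe_inj]
  decide

theorem windowStats_three :
    windowStats 3 = {(0, 0, 1), (1, 0, 0), (1, 0, 1), (1, 1, 0), (2, 1, 0)} := by
  rw [show 3 = 2 * 1 + 1 from rfl, windowStats_two_mul_add_one, windowStats_one, windowStats_two]
  simp only [oddLift, ← Finset.coe_singleton, ← Finset.coe_insert, ← Finset.coe_image,
    ← Finset.coe_union, Finset.coe_inj]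
  decide

theorem windowStats_four :
    windowStats 4 = {(1, 0, 0), (1, 0, 1), (1, 1, 1), (2, 0, 0), (2, 1, 0), (2, 1, 1)} := by
  rw [show 4 = 2 * 2 from rfl, windowStats_two_mul, windowStats_two]
  simp only [evenLift, ← Finset.coe_singleton, ← Finset.coe_insert, ← Finset.coe_image,
    ← Finset.coe_union, Finset.coe_inj]
  decide

theorem windowStats_five :
    windowStats 5 = {(1, 0, 0), (1, 0, 1), (2, 0, 0), (2, 0, 1), (2, 1, 0), (3, 1, 0)} := by
  rw [show 5 = 2 * 2 + 1 from rfl, windowStats_two_mul_add_one, windowStats_two, windowStats_three]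
  simp only [oddLift, ← Finset.coe_singleton, ← Finset.coe_insert, ← Finset.coe_image,
    ← Finset.coe_union, Finset.coe_inj]
  decide

theorem windowStats_six : windowStats 6 =
    {(1, 0, 0), (1, 0, 1), (2, 0, 0), (2, 0, 1), (2, 1, 0), (2, 1, 1), (3, 0, 0), (3, 1, 0)} := by
  rw [show 6 = 2 * 3 from rfl, windowStats_two_mul, windowStats_three]
  simp only [evenLift, ← Finset.coe_singleton, ← Finset.coe_insert, ← Finset.coe_image,
    ← Finset.coe_union, Finset.coe_inj]
  decide

-- `⌊(2^k - 1) / 3⌋`, the fewest 1s in a factor of `p` of length `2^k`.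
def powOnes : ℕ → ℕ
  | 0 => 0
  | k + 1 => 2 ^ k - 1 - powOnes k

theorem powOnes_lt (k : ℕ) : powOnes k < 2 ^ k := by
  induction k with
  | zero => simp [powOnes]
  | succ k ih => rw [powOnes, pow_succ]; omega

theorem powOnes_add_powOnes_succ (k : ℕ) : powOnes k + powOnes (k + 1) + 1 = 2 ^ k := by
  have := powOnes_lt k
  rw [powOnes]
  omega

def powShape : Set (ℕ × ℕ × ℕ) :=
  {(0, 0, 0), (0, 0, 1), (0, 1, 1), (1, 0, 0), (1, 1, 0), (1, 1, 1)}

theorem powShape_fst_le : ∀ u ∈ powShape, u.1 ≤ 1 := by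
  simp [powShape]

theorem windowStats_pow {k : ℕ} (hk : 2 ≤ k) :
    windowStats (2 ^ k) = addOnes (powOnes k) powShape := by
  induction k, hk using Nat.le_induction with
  | base =>
    rw [show 2 ^ 2 = 4 from rfl, windowStats_four, show powOnes 2 = 1 from rfl]
    simp only [addOnes, powShape, ← Finset.coe_singleton, ← Finset.coe_insert,
      ← Finset.coe_image, Finset.coe_inj]
    decide
  | succ k hk ih =>
    rw [pow_succ', windowStats_two_mul, ih, ← powOnes_add_powOnes_succ k,
      evenLift_addOnes powShape_fst_le]
    congr 1
    simp only [evenLift, powShape, ← Finset.coe_singleton, ← Finset.coe_insert,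
      ← Finset.coe_image, ← Finset.coe_union, Finset.coe_inj]
    decide

theorem windowStats_pow_add_one {k : ℕ} (hk : 2 ≤ k) :
    windowStats (2 ^ k + 1) = shiftStats (powOnes k) (windowStats 1) := by
  induction k, hk using Nat.le_induction with
  | base =>
    rw [show 2 ^ 2 + 1 = 5 from rfl, windowStats_five, windowStats_one,
      show powOnes 2 = 1 from rfl]
    simp only [shiftStats, addOnes, ← Finset.coe_singleton, ← Finset.coe_insert,
      ← Finset.coe_image, ← Finset.coe_union, Finset.coe_inj]
    decide
  | succ k hk ih =>
    have hle : ∀ u ∈ windowStats 1 ∪ addOnes 1 (windowStats 1), u.1 ≤ 1 + 1 :=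
      fst_le_of_mem_union_addOnes windowStats_fst_le
    rw [pow_succ', windowStats_two_mul_add_one, windowStats_pow hk, ih, shiftStats, shiftStats,
      ← powOnes_add_powOnes_succ k, oddLift_addOnes powShape_fst_le hle]
    congr 1
    rw [windowStats_one]
    simp only [oddLift, addOnes, powShape, ← Finset.coe_singleton, ← Finset.coe_insert,
      ← Finset.coe_image, ← Finset.coe_union, Finset.coe_inj]
    decide

theorem windowStats_eight_add {ρ : ℕ} (hρ : 2 ≤ ρ) (hρ4 : ρ ≤ 4) :
    windowStats (2 ^ 3 + ρ) = shiftStats (powOnes 3) (windowStats ρ) := by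
  rw [show powOnes 3 = 2 from rfl]
  interval_cases ρ
  · rw [show 2 ^ 3 + 2 = 2 * 5 from rfl, windowStats_two_mul, windowStats_five, windowStats_two]
    simp only [evenLift, shiftStats, addOnes, ← Finset.coe_singleton, ← Finset.coe_insert,
      ← Finset.coe_image, ← Finset.coe_union, Finset.coe_inj]
    decide
  · rw [show 2 ^ 3 + 3 = 2 * 5 + 1 from rfl, windowStats_two_mul_add_one, windowStats_five,
      windowStats_six, windowStats_three]
    simp only [oddLift, shiftStats, addOnes, ← Finset.coe_singleton, ← Finset.coe_insert,
      ← Finset.coe_image, ← Finset.coe_union, Finset.coe_inj]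
    decide
  · rw [show 2 ^ 3 + 4 = 2 * 6 from rfl, windowStats_two_mul, windowStats_six, windowStats_four]
    simp only [evenLift, shiftStats, addOnes, ← Finset.coe_singleton, ← Finset.coe_insert,
      ← Finset.coe_image, ← Finset.coe_union, Finset.coe_inj]
    decide

-- For `k = 2` this fails at `ρ = 2`: `windowStats 6` lacks `(3, 1, 1)`.
theorem windowStats_pow_add {k ρ : ℕ} (hk : 3 ≤ k) (hρ : 1 ≤ ρ) (hρk : ρ ≤ 2 ^ (k - 1)) :
    windowStats (2 ^ k + ρ) = shiftStats (powOnes k) (windowStats ρ) := by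
  obtain rfl | hρ2 := hρ.eq_or_lt
  · exact windowStats_pow_add_one (by omega)
  induction k, hk using Nat.le_induction generalizing ρ with
  | base => exact windowStats_eight_add hρ2 hρk
  | succ k hk ih =>
    have hn := powOnes_add_powOnes_succ k
    have hpow : 2 ^ (k + 1 - 1) = 2 * 2 ^ (k - 1) := by
      rw [← pow_succ']; congr 1; omega
    have ih' {σ : ℕ} (hσ : 1 ≤ σ) (hσk : σ ≤ 2 ^ (k - 1)) :
        windowStats (2 ^ k + σ) = shiftStats (powOnes k) (windowStats σ) := by
      obtain rfl | hσ2 := hσ.eq_or_lt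
      exacts [windowStats_pow_add_one (by omega), ih hσ hσk hσ2]
    obtain ⟨σ, rfl | rfl⟩ := ρ.even_or_odd'
    · rw [show 2 ^ (k + 1) + 2 * σ = 2 * (2 ^ k + σ) by ring, windowStats_two_mul,
        ih' (by omega) (by omega), windowStats_two_mul, evenLift_shiftStats hn windowStats_fst_le]
    · rw [show 2 ^ (k + 1) + (2 * σ + 1) = 2 * (2 ^ k + σ) + 1 by ring,
        windowStats_two_mul_add_one, ih' (by omega) (by omega), add_assoc,
        ih' (by omega) (by omega), windowStats_two_mul_add_one,
        oddLift_shiftStats hn windowStats_fst_le windowStats_fst_le]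

theorem count_zero_factorAt (i n : ℕ) :
    (factorAt xw i n).count 0 + 2 * pdSum i n + pd (i + n) = n + pd i := by
  induction n with
  | zero => simp [factorAt, pdSum]
  | succ n ih =>
    have hx : (if xw (i + n) = 0 then 1 else 0) + pd (i + n) + pd (i + n + 1) = 1 := by
      have := pd_add_pd_succ_le_one (i + n)
      have := pd_le_one (i + n)
      split_ifs with h <;> simp only [xw] at h <;> omega
    simp only [factorAt, List.range_succ, List.map_append, List.count_append, List.map_cons,
      List.map_nil, List.count_singleton', pdSum_succ] at ih ⊢
    rw [show i + (n + 1) = i + n + 1 by ring]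
    omega

theorem exists_count_zero_eq_iff {n v : ℕ} : (∃ i, (factorAt xw i n).count 0 = v) ↔
    ∃ t ∈ windowStats n, v + 2 * t.1 + t.2.2 = n + t.2.1 := by
  constructor
  · rintro ⟨i, rfl⟩
    exact ⟨windowTriple n i, ⟨i, rfl⟩, count_zero_factorAt i n⟩
  · rintro ⟨_, ⟨i, rfl⟩, h⟩
    have := count_zero_factorAt i n
    exact ⟨i, by simp only [windowTriple] at h; omega⟩

theorem bddAbove_count_zero (n : ℕ) : BddAbove {k | ∃ i, (factorAt xw i n).count 0 = k} :=
  ⟨n, by rintro _ ⟨i, rfl⟩; simpa [factorAt] using List.count_le_length (l := factorAt xw i n)⟩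

theorem le_M0 {n : ℕ} {t : ℕ × ℕ × ℕ} (ht : t ∈ windowStats n) :
    n + t.2.1 ≤ M0 n + 2 * t.1 + t.2.2 := by
  obtain ⟨i, rfl⟩ := ht
  have := count_zero_factorAt i n
  have := le_csSup (bddAbove_count_zero n) ⟨i, rfl⟩
  simp only [windowTriple, M0] at *
  omega

theorem m0_le {n : ℕ} {t : ℕ × ℕ × ℕ} (ht : t ∈ windowStats n) :
    m0 n + 2 * t.1 + t.2.2 ≤ n + t.2.1 := by
  obtain ⟨i, rfl⟩ := ht
  have := count_zero_factorAt i n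
  have := Nat.sInf_le (s := {k | ∃ i, (factorAt xw i n).count 0 = k}) ⟨i, rfl⟩
  simp only [windowTriple, m0] at *
  omega

theorem exists_M0 (n : ℕ) : ∃ t ∈ windowStats n, M0 n + 2 * t.1 + t.2.2 = n + t.2.1 :=
  exists_count_zero_eq_iff.1 <| Nat.sSup_mem (s := {k | ∃ i, (factorAt xw i n).count 0 = k})
    ⟨_, 0, rfl⟩ (bddAbove_count_zero n)

theorem exists_m0 (n : ℕ) : ∃ t ∈ windowStats n, m0 n + 2 * t.1 + t.2.2 = n + t.2.1 :=
  exists_count_zero_eq_iff.1 <| Nat.sInf_mem (s := {k | ∃ i, (factorAt xw i n).count 0 = k})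
    ⟨_, 0, rfl⟩

theorem M0_eq_of_windowStats {n B : ℕ}
    (hle : ∀ t ∈ windowStats n, n + t.2.1 ≤ B + 2 * t.1 + t.2.2)
    (hmem : ∃ t ∈ windowStats n, B + 2 * t.1 + t.2.2 = n + t.2.1) : M0 n = B := by
  obtain ⟨t, ht, h⟩ := exists_M0 n
  obtain ⟨t', ht', h'⟩ := hmem
  have := hle t ht
  have := le_M0 ht'
  omega

theorem m0_eq_of_windowStats {n B : ℕ}
    (hle : ∀ t ∈ windowStats n, B + 2 * t.1 + t.2.2 ≤ n + t.2.1)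
    (hmem : ∃ t ∈ windowStats n, B + 2 * t.1 + t.2.2 = n + t.2.1) : m0 n = B := by
  obtain ⟨t, ht, h⟩ := exists_m0 n
  obtain ⟨t', ht', h'⟩ := hmem
  have := hle t ht
  have := m0_le ht'
  omega

theorem M0_m0_of_windowStats_eq_shiftStats {n ρ c : ℕ}
    (h : windowStats (n + ρ) = shiftStats c (windowStats ρ)) :
    M0 (n + ρ) + 2 * c = n + M0 ρ ∧ m0 (n + ρ) + 2 * c + 2 = n + m0 ρ := by
  have lift {u} (hu : u ∈ windowStats ρ) {δ : ℕ} (hδ : δ ≤ 1) :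
      (c + δ + u.1, u.2) ∈ windowStats (n + ρ) :=
    h ▸ mem_shiftStats.2 ⟨u, hu, δ, hδ, rfl⟩
  obtain ⟨_, ht, hM⟩ := exists_M0 (n + ρ)
  obtain ⟨u, hu, δ, hδ, rfl⟩ := mem_shiftStats.1 (h ▸ ht)
  obtain ⟨_, ht', hm⟩ := exists_m0 (n + ρ)
  obtain ⟨u', hu', δ', hδ', rfl⟩ := mem_shiftStats.1 (h ▸ ht')
  obtain ⟨v, hv, hMρ⟩ := exists_M0 ρ
  obtain ⟨w, hw, hmρ⟩ := exists_m0 ρ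
  have := le_M0 hu
  have := m0_le hu'
  have := le_M0 (lift hv zero_le_one)
  have := m0_le (lift hw le_rfl)
  dsimp only at *
  omega

theorem M0_m0_pow {k : ℕ} (hk : 2 ≤ k) :
    M0 (2 ^ k) + 2 * powOnes k = 2 ^ k ∧ m0 (2 ^ k) + 2 * powOnes k + 2 = 2 ^ k := by
  have hshape : ∀ u ∈ powShape, u.2.1 ≤ 2 * u.1 + u.2.2 ∧ 2 * u.1 + u.2.2 ≤ u.2.1 + 2 := by
    simp [powShape]
  have lift {v} (hv : v ∈ powShape) : (powOnes k + v.1, v.2) ∈ windowStats (2 ^ k) :=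
    windowStats_pow hk ▸ ⟨v, hv, rfl⟩
  obtain ⟨_, ⟨u, hu, rfl⟩, hM⟩ := windowStats_pow hk ▸ exists_M0 (2 ^ k)
  obtain ⟨_, ⟨u', hu', rfl⟩, hm⟩ := windowStats_pow hk ▸ exists_m0 (2 ^ k)
  have := hshape u hu
  have := hshape u' hu'
  have := le_M0 (lift (v := (0, 0, 0)) (by simp [powShape]))
  have := m0_le (lift (v := (1, 0, 0)) (by simp [powShape]))
  dsimp only at *
  omega

theorem M0_zero : M0 0 = 0 := by
  simp [M0, factorAt]

theorem m0_zero : m0 0 = 0 := by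
  simp [m0, factorAt]

theorem M0_two : M0 2 = 2 :=
  M0_eq_of_windowStats (by rw [windowStats_two]; simp)
    ⟨(0, 0, 0), by rw [windowStats_two]; simp, rfl⟩

theorem m0_two : m0 2 = 0 :=
  m0_eq_of_windowStats (by rw [windowStats_two]; simp)
    ⟨(1, 0, 0), by rw [windowStats_two]; simp, rfl⟩

theorem M0_six : M0 6 = 4 :=
  M0_eq_of_windowStats (by rw [windowStats_six]; simp)
    ⟨(1, 0, 0), by rw [windowStats_six]; simp, rfl⟩

theorem m0_six : m0 6 = 0 :=
  m0_eq_of_windowStats (by rw [windowStats_six]; simp)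
    ⟨(3, 0, 0), by rw [windowStats_six]; simp, rfl⟩

theorem stmt11 (l r : ℕ) (hl : 2 ≤ l) (hr : 2 * r ≤ 2 ^ l) :
    M0 (2 ^ l + r) = M0 (2 ^ l) + M0 r ∧
    m0 (2 ^ l + r) = m0 (2 ^ l) + m0 r := by
  have hpow := M0_m0_pow hl
  obtain rfl | hr0 := Nat.eq_zero_or_pos r
  · simp [M0_zero, m0_zero]
  obtain rfl | hl3 := hl.eq_or_lt
  · have hc : powOnes 2 = 1 := rfl
    have hr2 : r ≤ 2 := by norm_num at hr; omega
    interval_cases r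
    · have := M0_m0_of_windowStats_eq_shiftStats (windowStats_pow_add_one le_rfl)
      omega
    · simp only [show 2 ^ 2 + 2 = 6 from rfl, M0_six, m0_six, M0_two, m0_two]
      omega
  · have hr' : r ≤ 2 ^ (l - 1) := by
      rw [show l = l - 1 + 1 by omega, pow_succ] at hr
      omega
    have := M0_m0_of_windowStats_eq_shiftStats (windowStats_pow_add hl3 hr0 hr')
    omega
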